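/- Strong duality for the free min-entropy: if F̂ is a nonempty closed convex cone of PSD matrices, then min{λ ∈ ℝ : λ𝟙 - ρ ∈ F̂*} = max{Tr[ρσ] : σ ∈ F̂, Tr[σ] = 1} for every density matrix ρ (the primal being strictly feasible since F̂* contains all PSD matrices). -/

import Mathlib

open Matrix ComplexOrder

noncomputable section

/-- Trace inner product on matrices: `⟨A, B⟩ = Re Tr[A B]` (real for Hermitian `A`, `B`). -/
def trInner {n : ℕ} (A B : Matrix (Fin n) (Fin n) ℂ) : ℝ := ((A * B).trace).re

/-- A density matrix: positive semidefinite with unit trace. -/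
def IsDensity {n : ℕ} (ρ : Matrix (Fin n) (Fin n) ℂ) : Prop := ρ.PosSemidef ∧ ρ.trace = 1
/-- The dual cone of a set of matrices, inside the real space of Hermitian matrices,
with respect to the trace inner product. -/
def dualCone {n : ℕ} (C : Set (Matrix (Fin n) (Fin n) ℂ)) : Set (Matrix (Fin n) (Fin n) ℂ) :=
  {B | B.IsHermitian ∧ ∀ A ∈ C, 0 ≤ trInner A B}

/-!
The trace-one base of `F̂` is compact, since the entries of a trace-one PSD matrix are bounded
by one, so `σ ↦ Tr[ρσ]` attains a maximum `v` on it. Every nonzero element of `F̂` is a positive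
multiple of a base element, so `λ𝟙 - ρ ∈ F̂*` holds exactly when `Tr[ρσ] ≤ λ` on the base;
hence `v` is also the least feasible `λ`.
-/

namespace Matrix.PosSemidef

variable {m : Type*} {A : Matrix m m ℂ}

theorem trace_eq_ofReal_re [Fintype m] (hA : A.PosSemidef) : A.trace = (A.trace.re : ℂ) :=
  Complex.eq_re_of_ofReal_le (r := 0) (by rw [Complex.ofReal_zero]; exact hA.trace_nonneg)

theorem re_trace_nonneg [Fintype m] (hA : A.PosSemidef) : 0 ≤ A.trace.re :=
  (Complex.nonneg_iff.mp hA.trace_nonneg).1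

theorem re_apply_self_nonneg (hA : A.PosSemidef) (i : m) : 0 ≤ (A i i).re :=
  (Complex.nonneg_iff.mp hA.diag_nonneg).1

/-- The principal `2 × 2` minor on rows `i, j` has nonnegative determinant. -/
theorem normSq_apply_le [Fintype m] (hA : A.PosSemidef) (i j : m) :
    Complex.normSq (A i j) ≤ (A i i).re * (A j j).re := by
  have hdet := (hA.submatrix ![i, j]).det_nonneg
  rw [det_fin_two] at hdet
  simp only [submatrix_apply, cons_val_zero, cons_val_one, ← hA.1.apply j i,
    Complex.star_def, Complex.mul_conj] at hdet
  have him_i := (Complex.nonneg_iff.mp (hA.diag_nonneg (i := i))).2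
  have him_j := (Complex.nonneg_iff.mp (hA.diag_nonneg (i := j))).2
  have hre := (Complex.nonneg_iff.mp hdet).1
  simp only [Complex.sub_re, Complex.mul_re, ← him_i, ← him_j, Complex.ofReal_re] at hre
  linarith

theorem re_apply_self_le_re_trace [Fintype m] (hA : A.PosSemidef) (i : m) :
    (A i i).re ≤ A.trace.re := by
  rw [trace, Complex.re_sum]
  exact Finset.single_le_sum (f := fun k => (A k k).re) (fun k _ => hA.re_apply_self_nonneg k)
    (Finset.mem_univ i)

theorem norm_apply_le_re_trace [Fintype m] (hA : A.PosSemidef) (i j : m) :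
    ‖A i j‖ ≤ A.trace.re := by
  have hsq : ‖A i j‖ ^ 2 ≤ A.trace.re ^ 2 := by
    rw [Complex.sq_norm, sq]
    exact (hA.normSq_apply_le i j).trans <| mul_le_mul (hA.re_apply_self_le_re_trace i)
      (hA.re_apply_self_le_re_trace j) (hA.re_apply_self_nonneg j) hA.re_trace_nonneg
  exact (pow_le_pow_iff_left₀ (norm_nonneg _) hA.re_trace_nonneg two_ne_zero).mp hsq

end Matrix.PosSemidef

def traceOneBase {m : Type*} [Fintype m] (F : Set (Matrix m m ℂ)) : Set (Matrix m m ℂ) :=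
  {σ | σ ∈ F ∧ σ.trace = 1}

theorem isCompact_traceOneBase {m : Type*} [Fintype m] {F : Set (Matrix m m ℂ)}
    (hclosed : IsClosed F) (hPSD : ∀ A ∈ F, A.PosSemidef) : IsCompact (traceOneBase F) := by
  refine (isCompact_univ_pi fun _ => isCompact_univ_pi fun _ => isCompact_closedBall (0 : ℂ) 1)
    |>.of_isClosed_subset (hclosed.inter (isClosed_eq continuous_id.matrix_trace continuous_const))
    fun σ hσ i _ j _ => ?_
  simpa [hσ.2] using (hPSD σ hσ.1).norm_apply_le_re_trace i j

section trInner

variable {n : ℕ}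

theorem trInner_comm (A B : Matrix (Fin n) (Fin n) ℂ) : trInner A B = trInner B A := by
  rw [trInner, trInner, trace_mul_comm]

theorem trInner_smul_right (A B : Matrix (Fin n) (Fin n) ℂ) (t : ℝ) :
    trInner A (t • B) = t * trInner A B := by
  rw [trInner, trInner, Matrix.mul_smul, trace_smul, Complex.smul_re, smul_eq_mul]

theorem trInner_smul_one_sub (A ρ : Matrix (Fin n) (Fin n) ℂ) (v : ℝ) :
    trInner A (v • 1 - ρ) = v * A.trace.re - trInner A ρ := by
  rw [trInner, trInner, mul_sub, Matrix.mul_smul, mul_one, trace_sub, trace_smul, Complex.sub_re,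
    Complex.smul_re, smul_eq_mul]

theorem continuous_trInner_right (ρ : Matrix (Fin n) (Fin n) ℂ) :
    Continuous fun σ => trInner ρ σ :=
  Complex.continuous_re.comp (continuous_const.matrix_mul continuous_id).matrix_trace

end trInner

theorem smul_one_sub_mem_dualCone_iff {n : ℕ} {F : Set (Matrix (Fin n) (Fin n) ℂ)}
    (hcone : ∀ t : ℝ, 0 ≤ t → ∀ A ∈ F, t • A ∈ F) (hPSD : ∀ A ∈ F, A.PosSemidef)
    {ρ : Matrix (Fin n) (Fin n) ℂ} (hρ : ρ.IsHermitian) (v : ℝ) :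
    v • 1 - ρ ∈ dualCone F ↔ ∀ σ ∈ traceOneBase F, trInner ρ σ ≤ v := by
  constructor
  · rintro ⟨-, hdual⟩ σ ⟨hσF, hσtr⟩
    have h := hdual σ hσF
    rw [trInner_smul_one_sub, hσtr, Complex.one_re, mul_one, trInner_comm] at h
    linarith
  · intro hbase
    refine ⟨by simp [IsHermitian, conjTranspose_sub, hρ.eq], fun A hA => ?_⟩
    obtain ⟨t, ht₀, htr⟩ : ∃ t : ℝ, 0 ≤ t ∧ A.trace = t :=
      ⟨_, (hPSD A hA).re_trace_nonneg, (hPSD A hA).trace_eq_ofReal_re⟩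
    rw [trInner_smul_one_sub, trInner_comm, htr, Complex.ofReal_re]
    rcases ht₀.eq_or_lt with rfl | ht
    · have hA₀ : A = 0 := (hPSD A hA).trace_eq_zero_iff.mp (by rw [htr, Complex.ofReal_zero])
      simp [hA₀, trInner]
    · have hnorm : t⁻¹ • A ∈ traceOneBase F := by
        refine ⟨hcone _ (inv_nonneg.mpr ht.le) A hA, ?_⟩
        rw [trace_smul, htr, Complex.real_smul, ← Complex.ofReal_mul, inv_mul_cancel₀ ht.ne',
          Complex.ofReal_one]
      have h := hbase _ hnorm
      rw [trInner_smul_right, inv_mul_le_iff₀ ht] at h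
      linarith

theorem freeMinEntropy_strong_duality_general (n : ℕ) (F : Set (Matrix (Fin n) (Fin n) ℂ))
    (hclosed : IsClosed F)
    (hcone : ∀ (t : ℝ), 0 ≤ t → ∀ A ∈ F, t • A ∈ F)
    (hPSD : ∀ A ∈ F, A.PosSemidef)
    (hbase : ∃ σ ∈ F, σ.trace = 1)
    (ρ : Matrix (Fin n) (Fin n) ℂ) (hρ : IsDensity ρ) :
    ∃ v : ℝ,
      IsLeast {lam : ℝ | lam • (1 : Matrix (Fin n) (Fin n) ℂ) - ρ ∈ dualCone F} v ∧
      IsGreatest {x : ℝ | ∃ σ ∈ F, σ.trace = 1 ∧ x = trInner ρ σ} v := by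
  obtain ⟨σ₀, hσ₀, hmax⟩ := (isCompact_traceOneBase hclosed hPSD).exists_isMaxOn hbase
    (continuous_trInner_right ρ).continuousOn
  have hmax' : ∀ σ ∈ traceOneBase F, trInner ρ σ ≤ trInner ρ σ₀ := isMaxOn_iff.mp hmax
  have hdual := smul_one_sub_mem_dualCone_iff hcone hPSD hρ.1.1
  refine ⟨trInner ρ σ₀, ⟨(hdual _).mpr hmax', fun v hv => (hdual v).mp hv σ₀ hσ₀⟩,
    ⟨σ₀, hσ₀.1, hσ₀.2, rfl⟩, ?_⟩
  rintro _ ⟨σ, hσF, hσtr, rfl⟩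
  exact hmax' σ ⟨hσF, hσtr⟩

/-- Strong duality for the free min-entropy: for a closed convex cone `F̂` of PSD matrices
with nonempty trace-one base, `min{λ : λ𝟙 - ρ ∈ F̂*} = max{Tr[ρσ] : σ ∈ F̂, Tr σ = 1}`,
both attained. -/
theorem freeMinEntropy_strong_duality (n : ℕ) (F : Set (Matrix (Fin n) (Fin n) ℂ))
    (hclosed : IsClosed F) (hconv : Convex ℝ F)
    (hcone : ∀ (t : ℝ), 0 ≤ t → ∀ A ∈ F, t • A ∈ F)
    (hPSD : ∀ A ∈ F, A.PosSemidef)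
    (hbase : ∃ σ ∈ F, σ.trace = 1)
    (ρ : Matrix (Fin n) (Fin n) ℂ) (hρ : IsDensity ρ) :
    ∃ v : ℝ,
      IsLeast {lam : ℝ | lam • (1 : Matrix (Fin n) (Fin n) ℂ) - ρ ∈ dualCone F} v ∧
      IsGreatest {x : ℝ | ∃ σ ∈ F, σ.trace = 1 ∧ x = trInner ρ σ} v :=
  freeMinEntropy_strong_duality_general n F hclosed hcone hPSD hbase ρ hρ
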